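/- arXiv:1610.08561 — 4 statements merged into one kernel-verified Lean document; each statement's English description precedes it below -/
import Mathlib

section
/- Fix λ > −1, positive integers n and N, and s ∈ [0,1]; set q = n/N. The recurrence coefficients α_n, β_n of the monic orthogonal polynomials for the weight w(x;λ,s) = x^λ exp(−N(x + s(x^2 − x))) on [0,∞) satisfy the string equations: 2s(β_{n+1} + β_n + α_n^2) + (1−s) α_n = 2q + (λ+1)/N, and β_n (2s α_n + 1 − s)(2s α_{n−1} + 1 − s) = (2s β_n − q)(2s β_n − q − λ/N). -/
/-!
For the functional `L p = ∫₀^∞ p w`, integrating the derivative of `x ^ (lam + 1) e^{-N V(x)} p(x)`,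
`V(x) = x + s (x² - x)`, gives the Pearson identity
`L (x p') + (lam + 1) L p = N (1 - s) L (x p) + 2 N s L (x² p)`: the boundary terms vanish because
`lam + 1 > 0` and `w` decays. Applied to `p = P n ^ 2` and to `p = P (n + 1) * P n`, with every term
evaluated through the recurrence and orthogonality, it yields the first string equation and
`σ (n + 1) = -β (n + 1) (2 N s (α (n + 1) + α n) + N (1 - s))` for the subleading coefficient
`σ n = -(α 0 + ⋯ + α (n - 1))` of `P n`. The second string equation follows by induction on `n`:
its increment is a combination of these two relations.
-/

open MeasureTheory Real Polynomial

noncomputable def w (lam : ℝ) (N : ℕ) (s : ℝ) (x : ℝ) : ℝ :=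
  x ^ lam * Real.exp (-(N : ℝ) * (x + s * (x ^ 2 - x)))

open Set Filter Topology

namespace Polynomial

variable {R : Type*} [Semiring R]

theorem coeff_X_mul_derivative (p : R[X]) (k : ℕ) :
    (X * derivative p).coeff k = k * p.coeff k := by
  cases k with
  | zero => simp
  | succ k => rw [coeff_X_mul, coeff_derivative, ← Nat.cast_succ, Nat.cast_comm]

theorem natDegree_X_mul_derivative_le (p : R[X]) : (X * derivative p).natDegree ≤ p.natDegree :=
  natDegree_le_iff_coeff_eq_zero.mpr fun k hk => by
    rw [coeff_X_mul_derivative, coeff_eq_zero_of_natDegree_lt hk, mul_zero]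

theorem coeff_X_mul_of_natDegree_eq {p : R[X]} {m : ℕ} (hp : p.natDegree = m) :
    (X * p).coeff m = p.nextCoeff := by
  cases m with
  | zero => simp [nextCoeff, hp]
  | succ m => rw [coeff_X_mul, nextCoeff_of_natDegree_pos (by omega), hp, Nat.add_sub_cancel]

end Polynomial

theorem second_string_equation_of_first {K : Type*} [CommRing K] {u v lam : K} {α β σ : ℕ → K}
    (hβ0 : β 0 = 0) (hσ0 : σ 0 = 0) (hσ : ∀ m, σ (m + 1) = σ m - α m)
    (hσβ : ∀ m, σ (m + 1) = -(β (m + 1) * (v * (α (m + 1) + α m) + u)))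
    (h1 : ∀ m, v * (β (m + 1) + β m + α m ^ 2) + u * α m = 2 * m + lam + 1) :
    ∀ m, β m * (v * α m + u) * (v * α (m - 1) + u) = (v * β m - m) * (v * β m - m - lam)
  | 0 => by simp [hβ0]
  | m + 1 => by
    have hσβ' : σ m = -(β m * (v * (α m + α (m - 1)) + u)) := by
      cases m with
      | zero => simp [hσ0, hβ0]
      | succ m => exact hσβ m
    have ih := second_string_equation_of_first hβ0 hσ0 hσ hσβ h1 m
    rw [Nat.add_sub_cancel]
    push_cast
    linear_combination ih + (v * α m + u) * hσβ m - (v * α m + u) * hσβ' - (v * α m + u) * hσ m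
      + (1 - v * (β (m + 1) - β m)) * h1 m

/-- `β 0 = 0` makes the recurrence uniform at `m = 0`, where `P (0 - 1)` is `P 0`. -/
structure IsMonicOrthogonalSequence {K : Type*} [Field K] (L : K[X] →ₗ[K] K) (P : ℕ → K[X])
    (α β : ℕ → K) : Prop where
  monic : ∀ m, (P m).Monic
  natDegree_eq : ∀ m, (P m).natDegree = m
  orthogonal : ∀ m k, m ≠ k → L (P m * P k) = 0
  recurrence : ∀ m, X * P m = P (m + 1) + C (α m) * P m + C (β m) * P (m - 1)
  β_zero : β 0 = 0

namespace IsMonicOrthogonalSequence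

variable {K : Type*} [Field K] {L : K[X] →ₗ[K] K} {P : ℕ → K[X]} {α β : ℕ → K}

theorem apply_zero (hP : IsMonicOrthogonalSequence L P α β) : P 0 = 1 :=
  (hP.monic 0).natDegree_eq_zero.mp (hP.natDegree_eq 0)

theorem coeff_self (hP : IsMonicOrthogonalSequence L P α β) (m : ℕ) : (P m).coeff m = 1 := by
  simpa [hP.natDegree_eq m] using (hP.monic m).coeff_natDegree

theorem coeff_eq_zero_of_lt (hP : IsMonicOrthogonalSequence L P α β) {m k : ℕ} (h : m < k) :
    (P m).coeff k = 0 :=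
  coeff_eq_zero_of_natDegree_lt (by rwa [hP.natDegree_eq])

theorem map_X_mul_mul (hP : IsMonicOrthogonalSequence L P α β) (m : ℕ) (Q : K[X]) :
    L (X * P m * Q) = L (P (m + 1) * Q) + α m * L (P m * Q) + β m * L (P (m - 1) * Q) := by
  simp only [hP.recurrence m, add_mul, C_mul', smul_mul_assoc, map_add, map_smul, smul_eq_mul]

theorem map_X_pow_mul_eq_zero (hP : IsMonicOrthogonalSequence L P α β) :
    ∀ {k m : ℕ}, k < m → L (X ^ k * P m) = 0
  | 0, m, h => by simpa [hP.apply_zero] using hP.orthogonal 0 m h.ne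
  | k + 1, m, h => by
    have hm : ∀ j, k < j → L (X ^ k * P j) = 0 := fun j hj => hP.map_X_pow_mul_eq_zero hj
    rw [pow_succ, mul_assoc, hP.recurrence m]
    simp only [mul_add, C_mul', mul_smul_comm, map_add, map_smul, smul_eq_mul,
      hm (m + 1) (by omega), hm m (by omega), hm (m - 1) (by omega), mul_zero, add_zero]

theorem map_mul_eq_zero_of_degree_lt (hP : IsMonicOrthogonalSequence L P α β) {Q : K[X]} {m : ℕ}
    (hQ : Q.degree < m) : L (Q * P m) = 0 := by
  classical
  have : degreeLT K m ≤ LinearMap.ker (L ∘ₗ LinearMap.mulRight K (P m)) := by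
    rw [degreeLT_eq_span_X_pow, Submodule.span_le]
    intro q hq
    obtain ⟨k, hk, rfl⟩ := Finset.mem_image.mp hq
    exact hP.map_X_pow_mul_eq_zero (Finset.mem_range.mp hk)
  exact this (mem_degreeLT.mpr hQ)

theorem map_mul_eq_coeff_mul (hP : IsMonicOrthogonalSequence L P α β) {Q : K[X]} {m : ℕ}
    (hQ : Q.natDegree ≤ m) : L (Q * P m) = Q.coeff m * L (P m * P m) := by
  have hlow : (Q - C (Q.coeff m) * P m).degree < m := by
    rw [degree_lt_iff_coeff_zero]
    intro k hk
    rcases hk.eq_or_lt with rfl | hk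
    · simp [hP.coeff_self]
    · simp [coeff_eq_zero_of_natDegree_lt (hQ.trans_lt hk), hP.coeff_eq_zero_of_lt hk]
  have := hP.map_mul_eq_zero_of_degree_lt hlow
  rwa [sub_mul, map_sub, mul_assoc, C_mul', map_smul, smul_eq_mul, sub_eq_zero] at this

theorem map_X_mul_mul_succ (hP : IsMonicOrthogonalSequence L P α β) (m : ℕ) :
    L (X * P m * P (m + 1)) = L (P (m + 1) * P (m + 1)) := by
  have hdeg : (X * P m).natDegree ≤ m + 1 := by
    rw [natDegree_X_mul (hP.monic m).ne_zero, hP.natDegree_eq]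
  rw [hP.map_mul_eq_coeff_mul hdeg, coeff_X_mul, hP.coeff_self, one_mul]

theorem map_X_mul_succ_mul (hP : IsMonicOrthogonalSequence L P α β) (m : ℕ) :
    L (X * P (m + 1) * P m) = β (m + 1) * L (P m * P m) := by
  rw [hP.map_X_mul_mul, hP.orthogonal (m + 2) m (by omega), hP.orthogonal (m + 1) m (by omega),
    Nat.add_sub_cancel]
  ring

theorem map_mul_self_succ (hP : IsMonicOrthogonalSequence L P α β) (m : ℕ) :
    L (P (m + 1) * P (m + 1)) = β (m + 1) * L (P m * P m) := by
  rw [← hP.map_X_mul_mul_succ, ← hP.map_X_mul_succ_mul, mul_right_comm]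

theorem β_mul_map_X_mul_pred_mul (hP : IsMonicOrthogonalSequence L P α β) (m : ℕ) :
    β m * L (X * P (m - 1) * P m) = β m * L (P m * P m) := by
  cases m with
  | zero => simp [hP.β_zero]
  | succ m => rw [Nat.add_sub_cancel, hP.map_X_mul_mul_succ]

theorem map_X_mul_mul_self (hP : IsMonicOrthogonalSequence L P α β) (m : ℕ) :
    L (X * P m * P m) = α m * L (P m * P m) := by
  rw [hP.map_X_mul_mul, hP.orthogonal (m + 1) m (by omega)]
  cases m with
  | zero => simp [hP.β_zero]
  | succ m => simp [hP.orthogonal m (m + 1) (by omega)]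

theorem map_X_sq_mul_mul_self (hP : IsMonicOrthogonalSequence L P α β) (m : ℕ) :
    L (X ^ 2 * P m * P m) = (β (m + 1) + α m ^ 2 + β m) * L (P m * P m) := by
  have hcomm : ∀ j, P j * (X * P m) = X * P m * P j := fun j => mul_comm _ _
  rw [show X ^ 2 * P m * P m = X * P m * (X * P m) by ring, hP.map_X_mul_mul, hcomm, hcomm,
    hP.map_X_mul_mul_succ, hP.map_mul_self_succ, hP.map_X_mul_mul_self, mul_comm (P (m - 1)),
    ← mul_right_comm, hP.β_mul_map_X_mul_pred_mul]
  ring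

theorem map_X_sq_mul_succ_mul (hP : IsMonicOrthogonalSequence L P α β) (m : ℕ) :
    L (X ^ 2 * P (m + 1) * P m) = (α (m + 1) + α m) * β (m + 1) * L (P m * P m) := by
  have hcomm : ∀ j, P j * (X * P m) = X * P m * P j := fun j => mul_comm _ _
  have hzero : L (X * P m * P (m + 2)) = 0 := by
    rw [hP.map_X_mul_mul, hP.orthogonal (m + 1) (m + 2) (by omega),
      hP.orthogonal m (m + 2) (by omega), hP.orthogonal (m - 1) (m + 2) (by omega)]
    ring
  rw [show X ^ 2 * P (m + 1) * P m = X * P (m + 1) * (X * P m) by ring, hP.map_X_mul_mul, hcomm,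
    hcomm, hcomm, Nat.add_sub_cancel, hzero, hP.map_X_mul_mul_succ, hP.map_mul_self_succ,
    hP.map_X_mul_mul_self]
  ring

theorem map_X_mul_derivative_mul_self (hP : IsMonicOrthogonalSequence L P α β) (m : ℕ) :
    L (X * derivative (P m) * P m) = m * L (P m * P m) := by
  rw [hP.map_mul_eq_coeff_mul ((natDegree_X_mul_derivative_le _).trans (hP.natDegree_eq m).le),
    coeff_X_mul_derivative, hP.coeff_self, mul_one]

theorem map_X_mul_derivative_mul_succ (hP : IsMonicOrthogonalSequence L P α β) (m : ℕ) :
    L (X * derivative (P m) * P (m + 1)) = 0 := by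
  have hdeg : (X * derivative (P m)).natDegree ≤ m + 1 :=
    (natDegree_X_mul_derivative_le _).trans ((hP.natDegree_eq m).trans_le m.le_succ)
  rw [hP.map_mul_eq_coeff_mul hdeg, coeff_X_mul_derivative, hP.coeff_eq_zero_of_lt m.lt_succ_self,
    mul_zero, zero_mul]

theorem nextCoeff_succ_eq_coeff (hP : IsMonicOrthogonalSequence L P α β) (m : ℕ) :
    (P (m + 1)).nextCoeff = (P (m + 1)).coeff m := by
  rw [nextCoeff_of_natDegree_pos (by rw [hP.natDegree_eq]; omega), hP.natDegree_eq,
    Nat.add_sub_cancel]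

theorem map_X_mul_derivative_succ_mul (hP : IsMonicOrthogonalSequence L P α β) (m : ℕ) :
    L (X * derivative (P (m + 1)) * P m) = -(P (m + 1)).nextCoeff * L (P m * P m) := by
  set Q := X * derivative (P (m + 1)) - C ((m : K) + 1) * P (m + 1)
  have hcoeff : ∀ k, Q.coeff k = (k - (m + 1)) * (P (m + 1)).coeff k := fun k => by
    simp only [Q, coeff_sub, coeff_C_mul, coeff_X_mul_derivative]
    ring
  have hQ : Q.natDegree ≤ m := natDegree_le_iff_coeff_eq_zero.mpr fun k hk => by
    rcases (Nat.succ_le_of_lt hk).eq_or_lt with rfl | hk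
    · rw [hcoeff]; push_cast; ring
    · rw [hcoeff, hP.coeff_eq_zero_of_lt hk, mul_zero]
  calc L (X * derivative (P (m + 1)) * P m) = L (Q * P m) := by
        rw [sub_mul, map_sub, C_mul', smul_mul_assoc, map_smul, hP.orthogonal (m + 1) m (by omega),
          smul_zero, sub_zero]
    _ = -(P (m + 1)).nextCoeff * L (P m * P m) := by
        rw [hP.map_mul_eq_coeff_mul hQ, hcoeff, hP.nextCoeff_succ_eq_coeff]
        ring

theorem nextCoeff_succ (hP : IsMonicOrthogonalSequence L P α β) (m : ℕ) :
    (P (m + 1)).nextCoeff = (P m).nextCoeff - α m := by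
  have h := congrArg (coeff · m) (hP.recurrence m)
  have hβ : β m * (P (m - 1)).coeff m = 0 := by
    cases m with
    | zero => simp [hP.β_zero]
    | succ m => rw [Nat.add_sub_cancel, hP.coeff_eq_zero_of_lt (by omega), mul_zero]
  simp only [coeff_add, coeff_C_mul, hP.coeff_self, coeff_X_mul_of_natDegree_eq (hP.natDegree_eq m),
    ← hP.nextCoeff_succ_eq_coeff] at h
  linear_combination -h - hβ

variable {u v lam : K}

theorem first_string_equation (hP : IsMonicOrthogonalSequence L P α β)
    (hL : ∀ p, L (X * derivative p) + (lam + 1) * L p = u * L (X * p) + v * L (X ^ 2 * p))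
    {m : ℕ} (hm : L (P m * P m) ≠ 0) :
    v * (β (m + 1) + β m + α m ^ 2) + u * α m = 2 * m + lam + 1 := by
  have h := hL (P m * P m)
  rw [show X * derivative (P m * P m) = X * derivative (P m) * P m + X * derivative (P m) * P m by
    rw [derivative_mul]; ring, map_add, hP.map_X_mul_derivative_mul_self, ← mul_assoc,
    ← mul_assoc, hP.map_X_mul_mul_self, hP.map_X_sq_mul_mul_self] at h
  apply mul_right_cancel₀ hm
  linear_combination -h

theorem nextCoeff_succ_eq_of_pearson (hP : IsMonicOrthogonalSequence L P α β)
    (hL : ∀ p, L (X * derivative p) + (lam + 1) * L p = u * L (X * p) + v * L (X ^ 2 * p))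
    {m : ℕ} (hm : L (P m * P m) ≠ 0) :
    (P (m + 1)).nextCoeff = -(β (m + 1) * (v * (α (m + 1) + α m) + u)) := by
  have h := hL (P (m + 1) * P m)
  rw [show X * derivative (P (m + 1) * P m)
      = X * derivative (P (m + 1)) * P m + X * derivative (P m) * P (m + 1) by
    rw [derivative_mul]; ring, map_add, hP.map_X_mul_derivative_succ_mul,
    hP.map_X_mul_derivative_mul_succ, hP.orthogonal (m + 1) m (by omega), ← mul_assoc,
    ← mul_assoc, hP.map_X_mul_succ_mul, hP.map_X_sq_mul_succ_mul] at h
  apply mul_right_cancel₀ hm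
  linear_combination -h

theorem second_string_equation (hP : IsMonicOrthogonalSequence L P α β)
    (hL : ∀ p, L (X * derivative p) + (lam + 1) * L p = u * L (X * p) + v * L (X ^ 2 * p))
    (hh : ∀ m, L (P m * P m) ≠ 0) (m : ℕ) :
    β m * (v * α m + u) * (v * α (m - 1) + u) = (v * β m - m) * (v * β m - m - lam) :=
  second_string_equation_of_first (σ := fun m => (P m).nextCoeff) hP.β_zero
    (by rw [hP.apply_zero, ← C_1, nextCoeff_C_eq_zero]) hP.nextCoeff_succ
    (fun m => hP.nextCoeff_succ_eq_of_pearson hL (hh m)) (fun m => hP.first_string_equation hL (hh m))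
    m

end IsMonicOrthogonalSequence

noncomputable def integralAgainst (f : ℝ → ℝ) (μ : Measure ℝ)
    (hf : ∀ p : ℝ[X], Integrable (fun x => p.eval x * f x) μ) : ℝ[X] →ₗ[ℝ] ℝ where
  toFun p := ∫ x, p.eval x * f x ∂μ
  map_add' p q := by simp only [eval_add, add_mul]; exact integral_add (hf p) (hf q)
  map_smul' c p := by
    simp only [eval_smul, smul_eq_mul, mul_assoc, RingHom.id_apply]
    exact integral_const_mul c _

theorem integrable_eval_mul_of_pow_mul {f : ℝ → ℝ} {μ : Measure ℝ}
    (hf : ∀ i : ℕ, Integrable (fun x => x ^ i * f x) μ) (p : ℝ[X]) :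
    Integrable (fun x => p.eval x * f x) μ := by
  induction p using Polynomial.induction_on' with
  | add p q hp hq => simp only [eval_add, add_mul]; exact hp.add hq
  | monomial n a => simpa only [eval_monomial, mul_assoc] using (hf n).const_mul a

section Laguerre

variable {lam : ℝ} {N : ℕ} {s : ℝ}

theorem neg_mul_potential_le (hN : 1 ≤ N) (hs : s ∈ Icc (0 : ℝ) 1) {x : ℝ} (hx : 0 ≤ x) :
    -(N : ℝ) * (x + s * (x ^ 2 - x)) ≤ 1 - x := by
  have hN' : (1 : ℝ) ≤ N := by exact_mod_cast hN
  have hV : 0 ≤ x + s * (x ^ 2 - x) := by nlinarith [hs.1, hs.2]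
  have hV' : x - 1 ≤ x + s * (x ^ 2 - x) := by nlinarith [hs.1, hs.2, sq_nonneg (x - 1 / 2)]
  nlinarith

theorem measurable_w : Measurable (w lam N s) := by
  unfold w; fun_prop

theorem integrableOn_pow_mul_w (hlam : -1 < lam) (hN : 1 ≤ N) (hs : s ∈ Icc (0 : ℝ) 1) (i : ℕ) :
    IntegrableOn (fun x => x ^ i * w lam N s x) (Ioi 0) := by
  have hΓ := (GammaIntegral_convergent (s := lam + i + 1)
    (by linarith [i.cast_nonneg (α := ℝ)])).const_mul (exp 1)
  refine hΓ.mono' ((measurable_id.pow_const i).mul measurable_w).aestronglyMeasurable ?_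
  filter_upwards [ae_restrict_mem measurableSet_Ioi] with x (hx : 0 < x)
  have hexp : exp (-(N : ℝ) * (x + s * (x ^ 2 - x))) ≤ exp 1 * exp (-x) := by
    rw [← exp_add]; exact exp_le_exp.mpr (by linarith [neg_mul_potential_le hN hs hx.le])
  rw [norm_of_nonneg (by unfold w; positivity), w,
    show lam + i + 1 - 1 = lam + i by ring, rpow_add hx, rpow_natCast]
  calc x ^ i * (x ^ lam * exp (-(N : ℝ) * (x + s * (x ^ 2 - x))))
      ≤ x ^ i * (x ^ lam * (exp 1 * exp (-x))) := by gcongr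
    _ = exp 1 * (exp (-x) * (x ^ lam * x ^ i)) := by ring

theorem integrableOn_eval_mul_w (hlam : -1 < lam) (hN : 1 ≤ N) (hs : s ∈ Icc (0 : ℝ) 1)
    (p : ℝ[X]) : IntegrableOn (fun x => p.eval x * w lam N s x) (Ioi 0) :=
  integrable_eval_mul_of_pow_mul (integrableOn_pow_mul_w hlam hN hs) p

noncomputable def laguerreFunctional (hlam : -1 < lam) (hN : 1 ≤ N) (hs : s ∈ Icc (0 : ℝ) 1) :
    ℝ[X] →ₗ[ℝ] ℝ :=
  integralAgainst (w lam N s) (volume.restrict (Ioi 0)) (integrableOn_eval_mul_w hlam hN hs)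

theorem laguerreFunctional_apply (hlam : -1 < lam) (hN : 1 ≤ N) (hs : s ∈ Icc (0 : ℝ) 1)
    (p : ℝ[X]) : laguerreFunctional hlam hN hs p = ∫ x in Ioi 0, p.eval x * w lam N s x :=
  rfl

theorem laguerreFunctional_mul_self_pos (hlam : -1 < lam) (hN : 1 ≤ N) (hs : s ∈ Icc (0 : ℝ) 1)
    {p : ℝ[X]} (hp : p ≠ 0) : 0 < laguerreFunctional hlam hN hs (p * p) := by
  have hnonneg : 0 ≤ᵐ[volume.restrict (Ioi 0)] fun x => (p * p).eval x * w lam N s x := by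
    filter_upwards [ae_restrict_mem measurableSet_Ioi] with x (hx : 0 < x)
    rw [eval_mul, w]
    exact mul_nonneg (mul_self_nonneg _) (by positivity)
  rw [laguerreFunctional_apply,
    setIntegral_pos_iff_support_of_nonneg_ae hnonneg (integrableOn_eval_mul_w hlam hN hs _)]
  have hsub : Ioi 0 \ {x | p.IsRoot x} ⊆
      Function.support (fun x => (p * p).eval x * w lam N s x) ∩ Ioi 0 := by
    rintro x ⟨hx, hroot⟩
    refine ⟨?_, hx⟩
    have : (0 : ℝ) < x ^ lam := rpow_pos_of_pos hx lam
    simp only [Function.mem_support, eval_mul, w]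
    have : p.eval x ≠ 0 := hroot
    positivity
  calc (0 : ENNReal) < volume (Ioi (0 : ℝ) \ {x | p.IsRoot x}) := by
        rw [measure_sdiff_null ((finite_setOfPred_isRoot hp).measure_zero _)]
        simp
    _ ≤ _ := measure_mono hsub

theorem hasDerivAt_rpow_mul_exp_mul_eval (p : ℝ[X]) {x : ℝ} (hx : 0 < x) :
    HasDerivAt (fun y => y ^ (lam + 1) * (exp (-(N : ℝ) * (y + s * (y ^ 2 - y))) * p.eval y))
      ((X * derivative p + C (lam + 1) * p - C (N * (1 - s)) * (X * p)
        - C (2 * N * s) * (X ^ 2 * p)).eval x * w lam N s x) x := by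
  have hpow : HasDerivAt (fun y => y ^ (lam + 1)) ((lam + 1) * x ^ lam) x := by
    simpa using hasDerivAt_rpow_const (p := lam + 1) (Or.inl hx.ne')
  have hV : HasDerivAt (fun y => -(N : ℝ) * (y + s * (y ^ 2 - y)))
      (-(N : ℝ) * (1 + s * (2 * x - 1))) x := by
    refine (((hasDerivAt_id' x).fun_add (((hasDerivAt_pow 2 x).fun_sub
      (hasDerivAt_id' x)).const_mul s)).const_mul (-(N : ℝ))).congr_deriv ?_
    push_cast
    ring
  refine (hpow.fun_mul (hV.exp.fun_mul (p.hasDerivAt x))).congr_deriv ?_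
  simp only [w, eval_sub, eval_add, eval_mul, eval_C, eval_X, eval_pow, rpow_add hx, rpow_one]
  ring

theorem laguerreFunctional_pearson (hlam : -1 < lam) (hN : 1 ≤ N) (hs : s ∈ Icc (0 : ℝ) 1)
    (p : ℝ[X]) :
    laguerreFunctional hlam hN hs (X * derivative p) + (lam + 1) * laguerreFunctional hlam hN hs p
      = N * (1 - s) * laguerreFunctional hlam hN hs (X * p)
        + 2 * N * s * laguerreFunctional hlam hN hs (X ^ 2 * p) := by
  set F := fun y => y ^ (lam + 1) * (exp (-(N : ℝ) * (y + s * (y ^ 2 - y))) * p.eval y)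
  have hderiv : ∀ x ∈ Ioi 0, HasDerivAt F _ x := fun x hx =>
    hasDerivAt_rpow_mul_exp_mul_eval p hx
  have hF : EqOn F (fun x => (X * p).eval x * w lam N s x) (Ioi 0) := fun x (hx : 0 < x) => by
    simp only [F, w, eval_mul, eval_X, rpow_add hx, rpow_one]
    ring
  have hcont : ContinuousWithinAt F (Ici 0) 0 := by
    refine ContinuousAt.continuousWithinAt (ContinuousAt.mul ?_ (by fun_prop))
    exact continuousAt_id.rpow_const (Or.inr (by linarith))
  have hlim : Tendsto F atTop (𝓝 0) :=
    tendsto_zero_of_hasDerivAt_of_integrableOn_Ioi hderiv (integrableOn_eval_mul_w hlam hN hs _)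
      ((integrableOn_eval_mul_w hlam hN hs _).congr_fun hF.symm measurableSet_Ioi)
  have h := integral_Ioi_of_hasDerivAt_of_tendsto hcont hderiv
    (integrableOn_eval_mul_w hlam hN hs _) hlim
  simp only [F, zero_rpow (by linarith : lam + 1 ≠ 0), zero_mul, sub_zero] at h
  rw [← laguerreFunctional_apply hlam hN hs] at h
  simp only [C_mul', LinearMap.map_sub, LinearMap.map_add, LinearMap.map_smul, smul_eq_mul] at h
  linear_combination h

end Laguerre

/-- String equations (Proposition 2.3): with `q = n/N`,
`2s(be_{n+1} + be_n + al_n^2) + (1-s) al_n = 2q + (lam+1)/N` and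
`be_n (2s al_n + 1 - s)(2s al_{n-1} + 1 - s) = (2s be_n - q)(2s be_n - q - lam/N)`. -/
theorem string_equations (lam : ℝ) (hlam : -1 < lam) (n N : ℕ) (hn : 1 ≤ n) (hN : 1 ≤ N)
    (s : ℝ) (hs : s ∈ Set.Icc (0 : ℝ) 1)
    (P : ℕ → Polynomial ℝ) (al be : ℕ → ℝ)
    (hmonic : ∀ m, (P m).Monic)
    (hdeg : ∀ m, (P m).natDegree = m)
    (horth : ∀ m k, m ≠ k →
      ∫ x in Set.Ioi (0 : ℝ), (P m).eval x * (P k).eval x * w lam N s x = 0)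
    (hrec : ∀ m : ℕ, Polynomial.X * P m =
      P (m + 1) + Polynomial.C (al m) * P m +
        Polynomial.C (be m) * (if m = 0 then 0 else P (m - 1))) :
    2 * s * (be (n + 1) + be n + (al n) ^ 2) + (1 - s) * al n
        = 2 * ((n : ℝ) / N) + (lam + 1) / N ∧
    be n * (2 * s * al n + 1 - s) * (2 * s * al (n - 1) + 1 - s)
        = (2 * s * be n - (n : ℝ) / N) * (2 * s * be n - (n : ℝ) / N - lam / N) := by
  set L := laguerreFunctional hlam hN hs
  have hP : IsMonicOrthogonalSequence L P al (fun m => if m = 0 then 0 else be m) :=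
    { monic := hmonic
      natDegree_eq := hdeg
      orthogonal := fun m k hmk => by
        simpa only [L, laguerreFunctional_apply, eval_mul] using horth m k hmk
      recurrence := fun m => by rw [hrec m]; split_ifs <;> simp
      β_zero := rfl }
  have hh : ∀ m, L (P m * P m) ≠ 0 := fun m =>
    (laguerreFunctional_mul_self_pos hlam hN hs (hmonic m).ne_zero).ne'
  have h1 := hP.first_string_equation (laguerreFunctional_pearson hlam hN hs) (hh n)
  have h2 := hP.second_string_equation (laguerreFunctional_pearson hlam hN hs) hh n
  simp only [if_neg (show n ≠ 0 by omega), if_neg n.succ_ne_zero] at h1 h2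
  constructor
  · field_simp
    linear_combination h1
  · field_simp
    linear_combination h2
end

section
/- Fix s ∈ (0,1] and set D = √(s^2 + 22s + 1), c = (s − 1 + D)/(3s), a = −s, b = (2s − 2 − D)/6, and ψ(x) = −(1/π)(a x + b)√((c − x)/x) for x ∈ (0,c). Then ψ(x) > 0 for every x ∈ (0,c) and ∫_0^c ψ(x) dx = 1; i.e. ψ is a probability density on (0,c). -/
open MeasureTheory Real

/-!
On `(0, c)` the factor `a x + b` is negative, so `ψ > 0`. For the mass, `(p x + q) √((c - x) / x)`
has the elementary primitive `(p x / 2 + q - p c / 4) √(x (c - x)) + (q c + p c² / 4) arcsin √(x / c)`,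
continuous on `[0, c]`. Its derivative for `p = 0`, `q = 1` is nonnegative, hence integrable, and the
fundamental theorem of calculus gives `∫₀ᶜ (p x + q) √((c - x) / x) dx = (π / 2) (q c + p c² / 4)`.
For `ψ` this equals `c (s c - 4 b) / 8 = (3 s c² - 2 (s - 1) c) / 8`, which is `1` because `c` is the
positive root of `3 s c² - 2 (s - 1) c = 8`.
-/

/-- `Δ(s) = √(s² + 22s + 1)`. -/
noncomputable def Dlt (s : ℝ) : ℝ := Real.sqrt (s ^ 2 + 22 * s + 1)

/-- Right endpoint `c = (s - 1 + Δ)/(3s)` of the support of the equilibrium measure. -/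
noncomputable def cEnd (s : ℝ) : ℝ := (s - 1 + Dlt s) / (3 * s)

/-- Density of the equilibrium measure:
`ψ(x) = -(1/π)(a x + b)√((c - x)/x)` with `a = -s`, `b = (2s - 2 - Δ)/6`. -/
noncomputable def psi (s x : ℝ) : ℝ :=
  -(1 / Real.pi) * (-s * x + (2 * s - 2 - Dlt s) / 6) * Real.sqrt ((cEnd s - x) / x)

lemma sqrt_sub_div_eq_sub_div_sqrt_mul {x c : ℝ} (hx : 0 < x) (hxc : x < c) :
    √((c - x) / x) = (c - x) / √(x * (c - x)) := by
  have hcx : 0 < c - x := sub_pos.mpr hxc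
  rw [Real.sqrt_div hcx.le, Real.sqrt_mul hx.le]
  nth_rewrite 2 [← Real.sq_sqrt hcx.le]
  have : 0 < √(c - x) := Real.sqrt_pos.mpr hcx
  field_simp

lemma hasDerivAt_sqrt_mul_sub {x c : ℝ} (hx : 0 < x) (hxc : x < c) :
    HasDerivAt (fun y => √(y * (c - y))) ((c - 2 * x) / (2 * √(x * (c - x)))) x := by
  have hprod := (hasDerivAt_id x).mul ((hasDerivAt_const x c).sub (hasDerivAt_id x))
  refine (hprod.sqrt (mul_pos hx (sub_pos.mpr hxc)).ne').congr_deriv ?_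
  simp only [id, Pi.mul_apply, Pi.sub_apply]
  ring

lemma hasDerivAt_arcsin_sqrt_div {x c : ℝ} (hx : 0 < x) (hxc : x < c) :
    HasDerivAt (fun y => arcsin √(y / c)) (1 / (2 * √(x * (c - x)))) x := by
  have hc : 0 < c := hx.trans hxc
  have hxc' : x / c < 1 := (div_lt_one hc).mpr hxc
  have hsqrt := ((hasDerivAt_id x).div_const c).sqrt (div_pos hx hc).ne'
  have h1 : √(x / c) ≠ -1 := by linarith [Real.sqrt_nonneg (x / c)]
  have h2 : √(x / c) ≠ 1 := ((Real.sqrt_lt' one_pos).mpr (by simpa using hxc')).ne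
  refine ((Real.hasDerivAt_arcsin h1 h2).comp x hsqrt).congr_deriv ?_
  simp only [id]
  have hcx : 0 < c - x := sub_pos.mpr hxc
  rw [Real.sq_sqrt (div_pos hx hc).le, show 1 - x / c = (c - x) / c by field_simp,
    Real.sqrt_div hcx.le, Real.sqrt_div hx.le, Real.sqrt_mul hx.le]
  have : 0 < √c := Real.sqrt_pos.mpr hc
  have : 0 < √x := Real.sqrt_pos.mpr hx
  have : 0 < √(c - x) := Real.sqrt_pos.mpr hcx
  field_simp
  exact Real.sq_sqrt hc.le

noncomputable def affineSqrtDivPrimitive (p q c x : ℝ) : ℝ :=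
  (p * x / 2 + q - p * c / 4) * √(x * (c - x)) + (q * c + p * c ^ 2 / 4) * arcsin √(x / c)

lemma continuous_affineSqrtDivPrimitive (p q c : ℝ) :
    Continuous (affineSqrtDivPrimitive p q c) := by
  unfold affineSqrtDivPrimitive
  fun_prop

lemma hasDerivAt_affineSqrtDivPrimitive (p q : ℝ) {x c : ℝ} (hx : 0 < x) (hxc : x < c) :
    HasDerivAt (affineSqrtDivPrimitive p q c) ((p * x + q) * √((c - x) / x)) x := by
  have hlin : HasDerivAt (fun y => p * y / 2 + q - p * c / 4) (p / 2) x := by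
    simpa using (((hasDerivAt_id x).const_mul p).div_const 2).add_const q |>.sub_const (p * c / 4)
  refine ((hlin.mul (hasDerivAt_sqrt_mul_sub hx hxc)).add
    ((hasDerivAt_arcsin_sqrt_div hx hxc).const_mul (q * c + p * c ^ 2 / 4))).congr_deriv ?_
  have hR := Real.mul_self_sqrt (mul_pos hx (sub_pos.mpr hxc)).le
  have : 0 < √(x * (c - x)) := Real.sqrt_pos.mpr (mul_pos hx (sub_pos.mpr hxc))
  rw [sqrt_sub_div_eq_sub_div_sqrt_mul hx hxc]
  field_simp
  linear_combination 8 * p * hR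

lemma affineSqrtDivPrimitive_zero (p q c : ℝ) : affineSqrtDivPrimitive p q c 0 = 0 := by
  simp [affineSqrtDivPrimitive]

lemma affineSqrtDivPrimitive_self (p q : ℝ) {c : ℝ} (hc : 0 < c) :
    affineSqrtDivPrimitive p q c c = π / 2 * (q * c + p * c ^ 2 / 4) := by
  simp only [affineSqrtDivPrimitive, sub_self, mul_zero, Real.sqrt_zero, div_self hc.ne',
    Real.sqrt_one, arcsin_one, zero_add]
  ring

lemma intervalIntegrable_sqrt_sub_div {c : ℝ} (hc : 0 < c) :
    IntervalIntegrable (fun x => √((c - x) / x)) volume 0 c := by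
  rw [intervalIntegrable_iff_integrableOn_Ioc_of_le hc.le]
  refine intervalIntegral.integrableOn_deriv_of_nonneg
    (continuous_affineSqrtDivPrimitive 0 1 c).continuousOn (fun x hx => ?_)
    (fun x _ => Real.sqrt_nonneg _)
  simpa using hasDerivAt_affineSqrtDivPrimitive 0 1 hx.1 hx.2

theorem integral_affine_mul_sqrt_sub_div (p q : ℝ) {c : ℝ} (hc : 0 < c) :
    ∫ x in (0)..c, (p * x + q) * √((c - x) / x) = π / 2 * (q * c + p * c ^ 2 / 4) := by
  rw [intervalIntegral.integral_eq_sub_of_hasDerivAt_of_le hc.le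
    (continuous_affineSqrtDivPrimitive p q c).continuousOn
    (fun x hx => hasDerivAt_affineSqrtDivPrimitive p q hx.1 hx.2)
    ((intervalIntegrable_sqrt_sub_div hc).continuousOn_mul (by fun_prop)),
    affineSqrtDivPrimitive_self p q hc, affineSqrtDivPrimitive_zero, sub_zero]

lemma Dlt_sq {s : ℝ} (hs : 0 ≤ s) : Dlt s ^ 2 = s ^ 2 + 22 * s + 1 :=
  Real.sq_sqrt (by positivity)

lemma Dlt_pos {s : ℝ} (hs : 0 ≤ s) : 0 < Dlt s :=
  Real.sqrt_pos.mpr (by positivity)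

lemma cEnd_pos {s : ℝ} (hs : 0 < s) : 0 < cEnd s := by
  have : 1 - s < Dlt s := by nlinarith [Dlt_sq hs.le, Dlt_pos hs.le]
  exact div_pos (by linarith) (by linarith)

lemma cEnd_mul_sub_eq_eight {s : ℝ} (hs : 0 < s) :
    cEnd s * (s * cEnd s - 4 * ((2 * s - 2 - Dlt s) / 6)) = 8 := by
  unfold cEnd
  field_simp
  linear_combination 18 * Dlt_sq hs.le

lemma psi_pos {s x : ℝ} (hs0 : 0 ≤ s) (hs1 : s ≤ 1) (hx : x ∈ Set.Ioo 0 (cEnd s)) :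
    0 < psi s x := by
  have hsqrt : 0 < √((cEnd s - x) / x) := Real.sqrt_pos.mpr (div_pos (by linarith [hx.2]) hx.1)
  have haffine : -s * x + (2 * s - 2 - Dlt s) / 6 < 0 := by
    nlinarith [Dlt_pos hs0, mul_nonneg hs0 hx.1.le]
  have hpi : -(1 / π) < 0 := by simp [pi_pos]
  exact mul_pos (mul_pos_of_neg_of_neg hpi haffine) hsqrt

/-- The equilibrium density `ψ` is positive on `(0,c)` and integrates to 1. -/
theorem equilibrium_density_is_probability_density (s : ℝ) (hs : s ∈ Set.Ioc (0 : ℝ) 1) :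
    (∀ x ∈ Set.Ioo (0 : ℝ) (cEnd s), 0 < psi s x) ∧
    ∫ x in Set.Ioo (0 : ℝ) (cEnd s), psi s x = 1 := by
  obtain ⟨hs0, hs1⟩ := hs
  refine ⟨fun x hx => psi_pos hs0.le hs1 hx, ?_⟩
  have hc := cEnd_pos hs0
  have hpsi : psi s = fun x =>
      (s / π * x + -((2 * s - 2 - Dlt s) / 6) / π) * √((cEnd s - x) / x) := by
    funext x
    unfold psi
    ring
  rw [← integral_Ioc_eq_integral_Ioo, ← intervalIntegral.integral_of_le hc.le, hpsi,
    integral_affine_mul_sqrt_sub_div _ _ hc]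
  field_simp
  linear_combination 6 * cEnd_mul_sub_eq_eight hs0
end

section
/- Fix λ > −1 and a positive integer N. Then the Laguerre Unitary Ensemble partition function Z_N^{LUE} = ∫_{[0,∞)^N} ∏_{j=1}^N x_j^λ e^{−N x_j} ∏_{1≤j<k≤N}(x_k − x_j)^2 dx_1…dx_N equals N^{−N(N+λ)} ∏_{j=1}^N Γ(j+1) Γ(j+λ), where Γ is the Gamma function. -/
open MeasureTheory Real

/-- Squared Vandermonde determinant `∏_{j<k} (x_k - x_j)^2`. -/
noncomputable def vdm2 (N : ℕ) (x : Fin N → ℝ) : ℝ :=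
  ∏ p ∈ Finset.univ.filter (fun p : Fin N × Fin N => p.1 < p.2), (x p.2 - x p.1) ^ 2

/-- Laguerre Unitary Ensemble partition function
`Z_N^{LUE} = ∫_{[0,∞)^N} ∏_j x_j^λ e^{-N x_j} ∏_{j<k}(x_k - x_j)² dx`. -/
noncomputable def ZLUE (lam : ℝ) (N : ℕ) : ℝ :=
  ∫ x in Set.univ.pi (fun _ : Fin N => Set.Ici (0 : ℝ)),
    (∏ j, x j ^ lam * Real.exp (-(N : ℝ) * x j)) * vdm2 N x

/-!
The squared Vandermonde determinant is `det V * det V`, so by the Andréief–Heine identity the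
`N`-fold integral equals `N!` times the Hankel determinant of the moments
`∫₀^∞ t^(λ+k) e^(-bt) dt = b^(-(λ+k+1)) Γ(λ+k+1)`. Pulling the powers of `b` out of the rows and
columns leaves `det Γ(a+i+j)` with `a = λ+1`. Since `Γ(a+i+j) = Γ(a+i) (a+i)⁽ʲ⁾` and the rising
factorial `(x)⁽ʲ⁾` is monic of degree `j` in `x`, this is `∏ Γ(a+i)` times the Vandermonde
determinant of `a, a+1, …, a+N-1`, i.e. a superfactorial.
-/

open Finset Matrix Equiv Nat

section Andreief

variable {ι : Type*} [Fintype ι] [DecidableEq ι]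

theorem Matrix.sum_perm_sum_perm_sign_mul_prod {R : Type*} [CommRing R] (M : Matrix ι ι R) :
    ∑ σ : Perm ι, ∑ τ : Perm ι, ((Perm.sign σ : ℤ) : R) * (Perm.sign τ : ℤ) *
      ∏ i, M (σ i) (τ i) = (Fintype.card ι)! * M.det := by
  have row_permuted (σ : Perm ι) :
      ∑ τ : Perm ι, ((Perm.sign τ : ℤ) : R) * ∏ i, M (σ i) (τ i) =
        (Perm.sign σ : ℤ) * M.det := by
    rw [← det_permute, ← det_transpose, det_apply']
    rfl
  have sign_mul_self (σ : Perm ι) : ((Perm.sign σ : ℤ) : R) * (Perm.sign σ : ℤ) = 1 := by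
    rw [← Int.cast_mul, ← Units.val_mul, Int.units_mul_self, Units.val_one, Int.cast_one]
  calc _ = ∑ σ : Perm ι, ((Perm.sign σ : ℤ) : R) *
        ∑ τ : Perm ι, ((Perm.sign τ : ℤ) : R) * ∏ i, M (σ i) (τ i) := by
          simp only [mul_sum, mul_assoc]
    _ = ∑ _σ : Perm ι, M.det := by
          simp only [row_permuted, ← mul_assoc, sign_mul_self, one_mul]
    _ = _ := by rw [sum_const, Finset.card_univ, Fintype.card_perm, nsmul_eq_mul]

theorem MeasureTheory.integral_det_mul_det {α : Type*} [MeasurableSpace α] (μ : Measure α)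
    [SigmaFinite μ] (f g : ι → α → ℝ) (hfg : ∀ i j, Integrable (fun t ↦ f i t * g j t) μ) :
    ∫ x, (of fun i j ↦ f i (x j)).det * (of fun i j ↦ g i (x j)).det ∂(Measure.pi fun _ ↦ μ) =
      (Fintype.card ι)! * (of fun i j ↦ ∫ t, f i t * g j t ∂μ).det := by
  have expand (x : ι → α) : (of fun i j ↦ f i (x j)).det * (of fun i j ↦ g i (x j)).det =
      ∑ σ : Perm ι, ∑ τ : Perm ι, ((Perm.sign σ : ℤ) : ℝ) * (Perm.sign τ : ℤ) *
        ∏ i, f (σ i) (x i) * g (τ i) (x i) := by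
    simp only [det_apply', of_apply, sum_mul_sum, prod_mul_distrib]
    exact sum_congr rfl fun σ _ ↦ sum_congr rfl fun τ _ ↦ by ring
  have integrable (σ τ : Perm ι) : Integrable
      (fun x : ι → α ↦ ∏ i, f (σ i) (x i) * g (τ i) (x i)) (Measure.pi fun _ ↦ μ) :=
    Integrable.fintype_prod (f := fun i t ↦ f (σ i) t * g (τ i) t) fun i ↦ hfg _ _
  simp_rw [expand]
  rw [integral_finsetSum _ fun σ _ ↦ integrable_finsetSum _ fun τ _ ↦
    (integrable σ τ).const_mul _, ← sum_perm_sum_perm_sign_mul_prod]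
  refine sum_congr rfl fun σ _ ↦ ?_
  rw [integral_finsetSum _ fun τ _ ↦ (integrable σ τ).const_mul _]
  refine sum_congr rfl fun τ _ ↦ ?_
  rw [integral_const_mul, integral_fintype_prod_eq_prod (fun i t ↦ f (σ i) t * g (τ i) t)]
  rfl

end Andreief

theorem vdm2_eq_det_vandermonde_sq (n : ℕ) (x : Fin n → ℝ) :
    vdm2 n x = (vandermonde x).det ^ 2 := by
  rw [vdm2, det_vandermonde, ← prod_pow, prod_filter, Fintype.prod_prod_type]
  refine prod_congr rfl fun i _ ↦ ?_
  rw [← prod_pow, ← filter_lt_eq_Ioi, prod_filter]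

theorem MeasureTheory.integral_prod_mul_det_vandermonde_sq (μ : Measure ℝ) [SigmaFinite μ]
    (w : ℝ → ℝ) {n : ℕ} (hw : ∀ i j : Fin n, Integrable (fun t ↦ w t * t ^ (i + j : ℕ)) μ) :
    ∫ x : Fin n → ℝ, (∏ i, w (x i)) * (vandermonde x).det ^ 2 ∂(Measure.pi fun _ ↦ μ) =
      n ! * (of fun i j : Fin n ↦ ∫ t, w t * t ^ (i + j : ℕ) ∂μ).det := by
  have factor (x : Fin n → ℝ) : (∏ i, w (x i)) * (vandermonde x).det ^ 2 =
      (of fun i j : Fin n ↦ w (x j) * x j ^ (i : ℕ)).det *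
        (of fun i j : Fin n ↦ x j ^ (i : ℕ)).det := by
    have weighted := det_mul_row (fun j ↦ w (x j)) (of fun i j : Fin n ↦ x j ^ (i : ℕ))
    simp only [of_apply] at weighted
    rw [weighted, ← det_transpose (vandermonde x), sq, mul_assoc]
    rfl
  simp_rw [factor, pow_add, ← mul_assoc]
  simpa using integral_det_mul_det μ (fun (i : Fin n) t ↦ w t * t ^ (i : ℕ)) (fun j t ↦ t ^ (j : ℕ))
    fun i j ↦ by simpa [pow_add, mul_assoc] using hw i j

theorem Matrix.det_of_pow_add_mul {R : Type*} [CommRing R] {n : ℕ} (c : R)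
    (A : Matrix (Fin n) (Fin n) R) :
    (of fun i j : Fin n ↦ c ^ (i + j : ℕ) * A i j).det = c ^ (n * (n - 1)) * A.det := by
  have : (of fun i j : Fin n ↦ c ^ (i + j : ℕ) * A i j) =
      of fun i j : Fin n ↦ c ^ (i : ℕ) * (of fun i j : Fin n ↦ c ^ (j : ℕ) * A i j) i j := by
    ext i j
    simp [pow_add, mul_assoc]
  rw [this, det_mul_column, det_mul_row, ← mul_assoc, ← prod_mul_distrib]
  simp_rw [← pow_add]
  rw [prod_pow_eq_pow_sum, sum_add_distrib, ← mul_two, Fin.sum_univ_eq_sum_range (fun i ↦ i),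
    sum_range_id_mul_two]

theorem Real.Gamma_add_nat_eq_mul_ascPochhammer {a : ℝ} (ha : 0 < a) (k : ℕ) :
    Gamma (a + k) = Gamma a * (ascPochhammer ℝ k).eval a := by
  induction k with
  | zero => simp
  | succ k ih =>
    rw [Nat.cast_succ, ← add_assoc, Gamma_add_one (by positivity), ih, ascPochhammer_succ_eval]
    ring

theorem Real.det_Gamma_add_add {a : ℝ} (ha : 0 < a) (n : ℕ) :
    (of fun i j : Fin n ↦ Gamma (a + i + j)).det = ∏ j : Fin n, (j ! : ℝ) * Gamma (a + j) := by
  have factor : (of fun i j : Fin n ↦ Gamma (a + i + j)) = of fun i j : Fin n ↦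
      Gamma (a + i) * (of fun i j : Fin n ↦ (ascPochhammer ℝ j).eval (a + i)) i j := by
    ext i j
    exact Gamma_add_nat_eq_mul_ascPochhammer (by positivity) j
  rw [factor, det_mul_column, ← det_eval_matrixOfPolynomials_eq_det_vandermonde
    (fun i : Fin n ↦ a + i) (fun j : Fin n ↦ ascPochhammer ℝ j)
    (fun j ↦ ascPochhammer_natDegree _ _) (fun j ↦ monic_ascPochhammer _ _), prod_mul_distrib,
    mul_comm]
  congr 1
  simp_rw [add_comm a, det_vandermonde_add]
  cases n with
  | zero => simp
  | succ n =>
    rw [det_vandermonde_id_eq_superFactorial, ← prod_range_succ_factorial,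
      Fin.prod_univ_eq_prod_range (fun j ↦ (j ! : ℝ)), Nat.cast_prod]

theorem Real.factorial_mul_prod_factorial_mul_Gamma (lam : ℝ) (n : ℕ) :
    (n ! : ℝ) * ∏ j : Fin n, (j ! : ℝ) * Gamma (lam + 1 + j) =
      ∏ j ∈ Icc 1 n, Gamma (j + 1) * Gamma (j + lam) := by
  induction n with
  | zero => simp
  | succ n ih =>
    rw [prod_Icc_succ_top (by omega), ← ih, Fin.prod_univ_castSucc, Gamma_nat_eq_factorial,
      factorial_succ]
    simp only [Fin.val_castSucc, Fin.val_last]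
    push_cast
    rw [show (n : ℝ) + 1 + lam = lam + 1 + n by ring]
    ring

section LaguerreWeight

open Set

variable {lam b : ℝ}

theorem integrableOn_Ici_rpow_mul_exp_neg_mul_mul_pow (hlam : -1 < lam) (hb : 0 < b) (k : ℕ) :
    IntegrableOn (fun t ↦ t ^ lam * exp (-b * t) * t ^ k) (Ici 0) := by
  rw [integrableOn_Ici_iff_integrableOn_Ioi]
  have hk : -1 < lam + k := by linarith [k.cast_nonneg (α := ℝ)]
  refine (integrableOn_rpow_mul_exp_neg_mul_rpow (p := 1) hk one_pos hb).congr_fun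
    (fun t (ht : 0 < t) ↦ ?_) measurableSet_Ioi
  simp only [rpow_one, rpow_add ht, rpow_natCast]
  ring

theorem integral_Ici_rpow_mul_exp_neg_mul_mul_pow (hlam : -1 < lam) (hb : 0 < b) (k : ℕ) :
    ∫ t in Ici 0, t ^ lam * exp (-b * t) * t ^ k =
      b ^ (-(lam + 1)) * b⁻¹ ^ k * Gamma (lam + 1 + k) := by
  have hk : 0 < lam + 1 + k := by linarith [k.cast_nonneg (α := ℝ)]
  have hconst : b ^ (-(lam + 1)) * b⁻¹ ^ k = (1 / b) ^ (lam + 1 + k) := by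
    rw [one_div, inv_rpow hb.le, ← rpow_neg hb.le, inv_pow, ← rpow_natCast, ← rpow_neg hb.le,
      ← rpow_add hb]
    ring_nf
  rw [hconst, ← integral_rpow_mul_exp_neg_mul_Ioi hk hb, integral_Ici_eq_integral_Ioi]
  refine setIntegral_congr_fun measurableSet_Ioi fun t (ht : 0 < t) ↦ ?_
  rw [show lam + 1 + k - 1 = lam + k by ring, rpow_add ht, rpow_natCast, neg_mul]
  ring

theorem setIntegral_laguerre_weight_mul_vdm2 (hlam : -1 < lam) (hb : 0 < b) (n : ℕ) :
    ∫ x in univ.pi fun _ : Fin n ↦ Ici (0 : ℝ), (∏ j, x j ^ lam * exp (-b * x j)) * vdm2 n x =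
      b ^ (-(n : ℝ) * (n + lam)) * ∏ j ∈ Icc 1 n, Gamma (j + 1) * Gamma (j + lam) := by
  have hankel : (of fun i j : Fin n ↦
        ∫ t in Ici 0, t ^ lam * exp (-b * t) * t ^ (i + j : ℕ)).det =
      (b ^ (-(lam + 1))) ^ n * b⁻¹ ^ (n * (n - 1)) * ∏ j : Fin n, (j ! : ℝ) * Gamma (lam + 1 + j) :=
    calc _ = (b ^ (-(lam + 1)) •
          of fun i j : Fin n ↦ b⁻¹ ^ (i + j : ℕ) * Gamma (lam + 1 + i + j)).det := by
          congr 1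
          ext i j
          rw [of_apply, integral_Ici_rpow_mul_exp_neg_mul_mul_pow hlam hb, Matrix.smul_apply,
            of_apply, smul_eq_mul, Nat.cast_add, pow_add]
          ring_nf
      _ = _ := by
          rw [det_smul, Fintype.card_fin, mul_assoc, ← det_Gamma_add_add (by linarith),
            ← det_of_pow_add_mul]
          rfl
  have powers : (b ^ (-(lam + 1))) ^ n * b⁻¹ ^ (n * (n - 1)) = b ^ (-(n : ℝ) * (n + lam)) := by
    rw [← rpow_natCast, ← rpow_mul hb.le, inv_pow, ← rpow_natCast, ← rpow_neg hb.le,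
      ← rpow_add hb]
    congr 1
    cases n with
    | zero => simp
    | succ n => push_cast; ring
  simp_rw [vdm2_eq_det_vandermonde_sq]
  rw [volume_pi, Measure.restrict_pi_pi, integral_prod_mul_det_vandermonde_sq _ _
    fun i j ↦ integrableOn_Ici_rpow_mul_exp_neg_mul_mul_pow hlam hb _, hankel, powers,
    ← factorial_mul_prod_factorial_mul_Gamma]
  ring

end LaguerreWeight

/-- Exact evaluation: `Z_N^{LUE} = N^{-N(N+λ)} ∏_{j=1}^N Γ(j+1)Γ(j+λ)`. -/
theorem ZLUE_eq_gamma_product (lam : ℝ) (hlam : -1 < lam) (N : ℕ) (hN : 1 ≤ N) :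
    ZLUE lam N =
      (N : ℝ) ^ (-(N : ℝ) * ((N : ℝ) + lam)) *
        ∏ j ∈ Finset.Icc 1 N, Real.Gamma ((j : ℝ) + 1) * Real.Gamma ((j : ℝ) + lam) :=
  setIntegral_laguerre_weight_mul_vdm2 hlam (Nat.cast_pos.mpr hN) N
end

section
/- Let N be a positive integer and let w : ℝ → [0,∞) be a measurable function such that x ↦ |x|^k w(x) is integrable on ℝ for every k ≤ 2N−2. Define the moments μ_k = ∫_ℝ x^k w(x) dx. Then (Heine's identity) ∫_{ℝ^N} ∏_{j=1}^N w(x_j) ∏_{1≤j<k≤N}(x_k − x_j)^2 dx_1…dx_N = N! · det[μ_{i+j}]_{i,j=0}^{N−1}. -/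
/-!
Writing the squared Vandermonde as `det [x_j ^ i] * det [x_j ^ i]` and expanding both determinants
over permutations `σ, τ`, each term of the integrand factors over the coordinates, so by Fubini it
integrates to `sign σ * sign τ * ∏ j, μ (σ j + τ j)`. Summing over `τ` gives the Hankel determinant
with rows permuted by `σ`, i.e. `sign σ * det (μ (i + k))`; the two signs of `σ` cancel, and summing
over `σ` gives `N!` copies.
-/

open MeasureTheory Real

open Equiv Matrix

namespace Matrix

variable {ι R : Type*} [Fintype ι] [DecidableEq ι] [CommRing R]

theorem det_of_mul_det_of_eq_sum (f g : ι → ι → R) :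
    (of f).det * (of g).det =
      ∑ σ : Perm ι, ∑ τ : Perm ι,
        ((Perm.sign σ : ℤ) : R) * (Perm.sign τ : ℤ) * ∏ j, f (σ j) j * g (τ j) j := by
  simp only [det_apply', of_apply, Finset.sum_mul_sum, Finset.prod_mul_distrib]
  refine Finset.sum_congr rfl fun σ _ => Finset.sum_congr rfl fun τ _ => ?_
  ring

theorem sum_sum_sign_mul_sign_mul_prod (M : Matrix ι ι R) :
    ∑ σ : Perm ι, ∑ τ : Perm ι,
        ((Perm.sign σ : ℤ) : R) * (Perm.sign τ : ℤ) * ∏ j, M (σ j) (τ j) =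
      (Fintype.card ι).factorial * M.det := by
  have row_sum (σ : Perm ι) :
      ∑ τ : Perm ι, ((Perm.sign τ : ℤ) : R) * ∏ j, M (σ j) (τ j) = Perm.sign σ * M.det := by
    rw [← det_permute, ← det_transpose, det_apply']
    rfl
  have sign_mul_self (σ : Perm ι) : ((Perm.sign σ : ℤ) : R) * (Perm.sign σ : ℤ) = 1 := by
    rw [← Int.cast_mul, ← Units.val_mul, Int.units_mul_self, Units.val_one, Int.cast_one]
  calc ∑ σ : Perm ι, ∑ τ : Perm ι,
        ((Perm.sign σ : ℤ) : R) * (Perm.sign τ : ℤ) * ∏ j, M (σ j) (τ j)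
      = ∑ σ : Perm ι, ((Perm.sign σ : ℤ) : R) * (Perm.sign σ : ℤ) * M.det := by
        simp only [mul_assoc, ← Finset.mul_sum, row_sum]
    _ = (Fintype.card ι).factorial * M.det := by
        simp only [sign_mul_self, one_mul, Finset.sum_const, Finset.card_univ, Fintype.card_perm,
          nsmul_eq_mul]

end Matrix

/-- Andréief's identity. -/
theorem integral_prod_mul_det_mul_det {α ι : Type*} [Fintype ι] [DecidableEq ι]
    [MeasurableSpace α] (μ : Measure α) [SigmaFinite μ] (w : α → ℝ) (f g : ι → α → ℝ)
    (hfg : ∀ i j, Integrable (fun t => f i t * g j t * w t) μ) :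
    ∫ x : ι → α, (∏ j, w (x j)) * ((of fun i j => f i (x j)).det * (of fun i j => g i (x j)).det)
        ∂(Measure.pi fun _ => μ) =
      (Fintype.card ι).factorial * (of fun i j => ∫ t, f i t * g j t * w t ∂μ).det := by
  have expand (x : ι → α) :
      (∏ j, w (x j)) * ((of fun i j => f i (x j)).det * (of fun i j => g i (x j)).det) =
        ∑ σ : Perm ι, ∑ τ : Perm ι, ((Perm.sign σ : ℤ) : ℝ) * (Perm.sign τ : ℤ) *
          ∏ j, f (σ j) (x j) * g (τ j) (x j) * w (x j) := by
    rw [det_of_mul_det_of_eq_sum, Finset.mul_sum]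
    refine Finset.sum_congr rfl fun σ _ => ?_
    rw [Finset.mul_sum]
    refine Finset.sum_congr rfl fun τ _ => ?_
    simp only [Finset.prod_mul_distrib]
    ring
  simp_rw [expand]
  rw [← sum_sum_sign_mul_sign_mul_prod]
  have term_integrable (σ τ : Perm ι) :
      Integrable (fun x : ι → α => ∏ j, f (σ j) (x j) * g (τ j) (x j) * w (x j))
        (Measure.pi fun _ => μ) :=
    Integrable.fintype_prod (f := fun j t => f (σ j) t * g (τ j) t * w t) fun j => hfg _ _
  rw [integral_finsetSum _ fun σ _ => integrable_finsetSum _ fun τ _ =>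
    (term_integrable σ τ).const_mul _]
  refine Finset.sum_congr rfl fun σ _ => ?_
  rw [integral_finsetSum _ fun τ _ => (term_integrable σ τ).const_mul _]
  refine Finset.sum_congr rfl fun τ _ => ?_
  rw [integral_const_mul, integral_fintype_prod_eq_prod (fun j t => f (σ j) t * g (τ j) t * w t)]
  rfl

theorem vdm2_eq_det_sq (N : ℕ) (x : Fin N → ℝ) :
    vdm2 N x = (of fun i j : Fin N => x j ^ (i : ℕ)).det ^ 2 := by
  rw [← det_transpose]
  change _ = (vandermonde x).det ^ 2
  rw [det_vandermonde, vdm2, Finset.prod_filter, ← Finset.univ_product_univ, Finset.prod_product,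
    ← Finset.prod_pow]
  refine Finset.prod_congr rfl fun i _ => ?_
  rw [← Finset.prod_pow, Finset.prod_ite, Finset.prod_const_one, mul_one]
  congr 1
  ext j
  simp

theorem heine_identity_general (N : ℕ) (w : ℝ → ℝ)
    (hw_meas : Measurable w)
    (hw_int : ∀ k : ℕ, k ≤ 2 * N - 2 → Integrable (fun x : ℝ => |x| ^ k * w x)) :
    ∫ x : Fin N → ℝ, (∏ j, w (x j)) * vdm2 N x =
      (Nat.factorial N : ℝ) *
        Matrix.det (Matrix.of fun i j : Fin N =>
          ∫ x : ℝ, x ^ ((i : ℕ) + (j : ℕ)) * w x) := by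
  have moment_integrable (i j : Fin N) :
      Integrable (fun t : ℝ => t ^ (i : ℕ) * t ^ (j : ℕ) * w t) := by
    have hmeas : Measurable fun t : ℝ => t ^ (i : ℕ) * t ^ (j : ℕ) * w t := by fun_prop
    refine (hw_int (i + j) (by omega)).norm.mono' hmeas.aestronglyMeasurable
      (.of_forall fun t => ?_)
    simp [pow_add]
  simp_rw [vdm2_eq_det_sq, sq, volume_pi,
    integral_prod_mul_det_mul_det volume w _ _ moment_integrable, Fintype.card_fin, pow_add]

/-- Heine's identity: the `N`-fold integral of `∏_j w(x_j)` against the squared Vandermonde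
equals `N!` times the Hankel determinant of the moments `μ_k = ∫ x^k w(x) dx`. -/
theorem heine_identity (N : ℕ) (hN : 0 < N) (w : ℝ → ℝ)
    (hw_meas : Measurable w) (hw_nonneg : ∀ x, 0 ≤ w x)
    (hw_int : ∀ k : ℕ, k ≤ 2 * N - 2 → Integrable (fun x : ℝ => |x| ^ k * w x)) :
    ∫ x : Fin N → ℝ, (∏ j, w (x j)) * vdm2 N x =
      (Nat.factorial N : ℝ) *
        Matrix.det (Matrix.of fun i j : Fin N =>
          ∫ x : ℝ, x ^ ((i : ℕ) + (j : ℕ)) * w x) :=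
  heine_identity_general N w hw_meas hw_int
end
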